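/- Let S be a smooth projective surface over ℂ with a ℙ¹-fibration π: S → C over a smooth projective curve C of genus g, and D a reduced SNC divisor with D·F = 2 for a fiber F. Let ρ_m: S → S_m be a relatively minimal model obtained by blowing down vertical (-1)-curves, D^h_m the cycle-theoretic image of the horizontal part of D, C₀ the minimal section with C₀² = -e, δ = D^h_m·C₀, and F_m the fiber class of S_m → C. Suppose that after the first stage of blow-downs each contracted (-1)-curve E_i satisfies D^h_i · E_i = 1, and that curves contracted before the first stage do not meet the horizontal divisor. Then there exists an effective divisor E' on S supported exactly on the exceptional locus of the first-stage contraction such that K_S + D ≡ (e + δ + 2g - 2)·ρ_m*(F_m) + D^v + E', where D^v is the vertical part of D. -/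
import Mathlib


/-- `pullChain N p i` is the composed pullback `N i →+ N 0` along the chain of blow-downs
`S = S_0 → S_1 → ⋯`, where `p i : N (i+1) →+ N i` is the pullback of the `i`-th
blow-down `β_i : S_i → S_{i+1}` on numerical divisor classes. -/
def pullChain (N : ℕ → Type*) [∀ i, AddCommGroup (N i)]
    (p : ∀ i, N (i + 1) →+ N i) : ∀ i, N i →+ N 0
  | 0 => AddMonoidHom.id _
  | (i + 1) => (pullChain N p i).comp (p i)

private lemma telescope_aux {M : Type*} [AddCommGroup M] (f g : ℕ → M) (a : ℕ) :
    ∀ b, a ≤ b → (∀ i, a ≤ i → i < b → f i = f (i + 1) + g i) →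
      f a = f b + ∑ i ∈ Finset.Ico a b, g i := by
  intro b hb
  induction b, hb using Nat.le_induction with
  | base =>
      intro _; simp
  | succ b hab ih =>
      intro h
      rw [ih (fun i hi hi' => h i hi (Nat.lt_succ_of_lt hi')),
        Finset.sum_Ico_succ_top hab, h b hab (Nat.lt_succ_self b)]
      abel

/-- Proposition 3.5.  Let `π : S → C` be a `ℙ¹`-fibration over a
smooth projective curve of genus `g`, `D = D^h + D^v` a reduced SNC divisor with
`D·F = 2`, and let `ρ_m : S = S_0 → S_1 → ⋯ → S_m` be the chain of blow-downs of
vertical `(-1)`-curves of Algorithm 3.4, ending with a `ℙ¹`-bundle `π_m : S_m → C`.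
We work with the groups `N i` of numerical classes on `S_i`, pullbacks `p i`,
canonical classes `K i`, horizontal boundaries `Dh i` (cycle-theoretic images of `D^h`),
and exceptional classes `E i`, subject to:
`K_i ≡ β_i*K_{i+1} + E_i`; in the first stage (`i < k₁`) the contracted curve misses the
horizontal divisor, so `Dh_i ≡ β_i* Dh_{i+1}`; in the later stages (`k₁ ≤ i < m`) it
meets it once, `Dh_i · E_i = 1`, so `Dh_i ≡ β_i* Dh_{i+1} - E_i`.  On `S_m`, with minimal
section `C₀`, `e = -C₀²`, `δ = D^h_m · C₀` and fibre class `F_m`, one has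
`K_{S_m} ≡ -2C₀ + (2g-2-e)F_m` and `D^h_m ≡ 2C₀ + (δ+2e)F_m`.  Then there is an
effective divisor `E'`, supported exactly on the exceptional locus of the first-stage
contraction `ρ_{k₁}` — namely `E' = ∑_{i<k₁} ρ_i*(E_i)` — such that
`K_S + D ≡ (e + δ + 2g - 2)·ρ_m*(F_m) + D^v + E'`. -/
theorem log_canonical_class_of_ruled_model
    (N : ℕ → Type*) [∀ i, AddCommGroup (N i)]
    (p : ∀ i, N (i + 1) →+ N i)
    (m k₁ : ℕ) (hk₁ : k₁ ≤ m)
    (K Dh E : ∀ i, N i) (D Dv : N 0) (C₀ F_m : N m)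
    (inter : N m →+ N m →+ ℤ)
    (g : ℕ) (e δ : ℤ)
    (hD : D = Dh 0 + Dv)
    (hK : ∀ i < m, K i = p i (K (i + 1)) + E i)
    (hDh₁ : ∀ i < k₁, Dh i = p i (Dh (i + 1)))
    (hDh₂ : ∀ i, k₁ ≤ i → i < m → Dh i = p i (Dh (i + 1)) - E i)
    (he : inter C₀ C₀ = -e) (hδ : inter (Dh m) C₀ = δ)
    (hC₀F : inter C₀ F_m = 1) (hFF : inter F_m F_m = 0)
    (hKm : K m = -(2 • C₀) + (2 * (g : ℤ) - 2 - e) • F_m)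
    (hDhm : Dh m = 2 • C₀ + (δ + 2 * e) • F_m) :
    ∃ E' : N 0,
      E' = ∑ i ∈ Finset.range k₁, pullChain N p i (E i) ∧
      K 0 + D =
        (e + δ + 2 * (g : ℤ) - 2) • pullChain N p m F_m + Dv + E' := by
  refine ⟨_, rfl, ?_⟩
  set f : ℕ → N 0 := fun i => pullChain N p i (K i + Dh i) with hf
  have step1 : ∀ i, 0 ≤ i → i < k₁ → f i = f (i + 1) + pullChain N p i (E i) := by
    intro i _ hi
    have hKi := hK i (lt_of_lt_of_le hi hk₁)
    have hDhi := hDh₁ i hi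
    have : K i + Dh i = p i (K (i + 1) + Dh (i + 1)) + E i := by
      rw [hKi, hDhi, map_add]; abel
    have e1 : pullChain N p (i + 1) = (pullChain N p i).comp (p i) := rfl
    simp only [hf]
    rw [this, map_add, e1, AddMonoidHom.comp_apply]
  have step2 : ∀ i, k₁ ≤ i → i < m → f i = f (i + 1) + (0 : N 0) := by
    intro i hi hi'
    have hKi := hK i hi'
    have hDhi := hDh₂ i hi hi'
    have : K i + Dh i = p i (K (i + 1) + Dh (i + 1)) := by
      rw [hKi, hDhi, map_add]; abel
    have e1 : pullChain N p (i + 1) = (pullChain N p i).comp (p i) := rfl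
    simp only [hf]
    rw [this, e1, AddMonoidHom.comp_apply, add_zero]
  have h1 : f 0 = f k₁ + ∑ i ∈ Finset.Ico 0 k₁, pullChain N p i (E i) :=
    telescope_aux f _ 0 k₁ (Nat.zero_le _) (fun i _ hi' => step1 i (Nat.zero_le _) hi')
  have h2 : f k₁ = f m + ∑ i ∈ Finset.Ico k₁ m, (0 : N 0) :=
    telescope_aux f _ k₁ m hk₁ step2
  have hfm : f m = (e + δ + 2 * (g : ℤ) - 2) • pullChain N p m F_m := by
    have : K m + Dh m = (e + δ + 2 * (g : ℤ) - 2) • F_m := by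
      rw [hKm, hDhm]
      have : (2 * (g : ℤ) - 2 - e) • F_m + (δ + 2 * e) • F_m
          = (e + δ + 2 * (g : ℤ) - 2) • F_m := by
        rw [← add_smul]; ring_nf
      rw [show -(2 • C₀) + (2 * (g : ℤ) - 2 - e) • F_m + (2 • C₀ + (δ + 2 * e) • F_m)
          = (2 * (g : ℤ) - 2 - e) • F_m + (δ + 2 * e) • F_m by abel, this]
    simp only [hf]
    rw [this, map_zsmul]
  have hf0 : f 0 = K 0 + Dh 0 := by simp [hf, pullChain]
  rw [hD, show K 0 + (Dh 0 + Dv) = (K 0 + Dh 0) + Dv by abel, ← hf0, h1, h2, hfm]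
  rw [Finset.sum_const_zero, add_zero, Finset.range_eq_Ico]
  abel
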